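/- arXiv:2101.00685 — 5 statements merged into one kernel-verified Lean document; each statement's English description precedes it below -/
import Mathlib

section
/- Let Γ be a discrete amenable group and let E ⊆ Γ. If for every left Følner net (Φ_α) for Γ there exists an index α such that Φ_α ∩ E ≠ ∅, then E is left syndetic (i.e., there is a finite set F ⊆ Γ with ⋃_{γ∈F} γE = Γ). -/
open Filter

/-- A left Følner net for a discrete group `G`: a net of non-empty finite subsets `Φ α`
with `|Φ α ∆ γΦ α| / |Φ α| → 0` for every `γ : G`. -/
def IsFolnerNet {G ι : Type} [Group G] [DecidableEq G] [Preorder ι]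
    (Φ : ι → Finset G) : Prop :=
  (∀ α, (Φ α).Nonempty) ∧
  ∀ γ : G, Tendsto
    (fun α => ((symmDiff (Φ α) ((Φ α).image (γ * ·))).card : ℝ) / (Φ α).card)
    atTop (nhds 0)

/-- A left Følner net bundled with its directed index set. -/
structure FolnerNet (G : Type) [Group G] [DecidableEq G] where
  ι : Type
  [pr : Preorder ι]
  [dir : IsDirected ι (· ≤ ·)]
  [ne : Nonempty ι]
  sets : ι → Finset G
  isFolner : IsFolnerNet sets

attribute [instance] FolnerNet.pr FolnerNet.dir FolnerNet.ne

/-- `E` is left syndetic: finitely many left translates of `E` cover `G`. -/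
def IsSyndetic {G : Type} [Group G] (E : Set G) : Prop :=
  ∃ F : Finset G, ∀ x : G, ∃ γ ∈ F, γ⁻¹ * x ∈ E

/-!
Right translations commute with left translations, so translating each set of a left Følner net
on the right, each by its own element, gives again a left Følner net. If `E` is not syndetic, then
for every finite `F` the translates `γE`, `γ ∈ F⁻¹`, miss some point, i.e. some right translate
`F g` is disjoint from `E`; moving every set of a Følner net off `E` this way gives a Følner net
that does not meet `E`.
-/

theorem exists_forall_mul_notMem_of_not_isSyndetic {G : Type} [Group G] {E : Set G}
    (hE : ¬ IsSyndetic E) (F : Finset G) : ∃ g : G, ∀ y ∈ F, y * g ∉ E := by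
  classical
  by_contra! h
  refine hE ⟨F.image (·⁻¹), fun x => ?_⟩
  obtain ⟨y, hy, hyE⟩ := h x
  exact ⟨y⁻¹, Finset.mem_image_of_mem _ hy, by simpa using hyE⟩

section

variable {G : Type} [Group G] [DecidableEq G]

theorem Finset.card_symmDiff_image_mul_right (s : Finset G) (γ g : G) :
    (symmDiff (s.image (· * g)) ((s.image (· * g)).image (γ * ·))).card
      = (symmDiff s (s.image (γ * ·))).card := by
  have hinj : Function.Injective (· * g) := mul_left_injective g
  have hcomm : (s.image (· * g)).image (γ * ·) = (s.image (γ * ·)).image (· * g) := by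
    simp only [Finset.image_image]
    exact Finset.image_congr fun x _ => (mul_assoc γ x g).symm
  rw [hcomm, ← Finset.image_symmDiff _ _ hinj, Finset.card_image_of_injective _ hinj]

theorem IsFolnerNet.image_mul_right {ι : Type} [Preorder ι] {Φ : ι → Finset G}
    (hΦ : IsFolnerNet Φ) (g : ι → G) : IsFolnerNet fun α => (Φ α).image (· * g α) := by
  obtain ⟨hne, htends⟩ := hΦ
  refine ⟨fun α => (hne α).image _, fun γ => ?_⟩
  simpa only [Finset.card_symmDiff_image_mul_right,
    Finset.card_image_of_injective _ (mul_left_injective _)] using htends γ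

def FolnerNet.mulRight (N : FolnerNet G) (g : N.ι → G) : FolnerNet G where
  ι := N.ι
  sets α := (N.sets α).image (· * g α)
  isFolner := N.isFolner.image_mul_right g

end

/-- If every left Følner net for the amenable group `G` meets `E`, then `E` is left syndetic. -/
theorem folnerNet_meets_imp_syndetic {G : Type} [Group G] [DecidableEq G]
    (hamen : Nonempty (FolnerNet G)) (E : Set G)
    (hmeet : ∀ N : FolnerNet G, ∃ α : N.ι, ∃ x ∈ N.sets α, x ∈ E) :
    IsSyndetic E := by
  by_contra hE
  obtain ⟨N⟩ := hamen
  choose g hg using fun α => exists_forall_mul_notMem_of_not_isSyndetic hE (N.sets α)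
  obtain ⟨α, x, hx, hxE⟩ := hmeet (N.mulRight g)
  obtain ⟨y, hy, rfl⟩ := Finset.mem_image.1 hx
  exact hg α y hy hxE
end

section
/- For every A ⊆ ℤ, the interval lower Banach density liminf_{b−a→∞} |A ∩ {a,…,b}|/(b−a+1) equals the infimum over all Følner sequences (F_n) for ℤ of liminf_{n→∞} |A ∩ F_n|/|F_n|. -/
/-!
A set whose density on every long interval is at least `c` has density at least `c`, up to a
boundary error, on any finite `F ⊆ ℤ`: averaging `|A ∩ (j + F)|` over the shifts `j` of an
interval `S` counts each `x ∈ F` once per point of `A ∩ (x + S)`, while each `|A ∩ (j + F)|`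
differs from `|A ∩ F|` by at most `|F ∆ (j + F)|`, which is small along a Følner sequence.
Conversely, intervals whose lengths tend to infinity form a Følner sequence, and along
suitably chosen ones the density approaches the interval lower Banach density.
-/

open Filter

/-- A Følner sequence for `ℤ`: non-empty finite sets `F n` with
`|F n ∆ (k + F n)| / |F n| → 0` for every `k : ℤ`. -/
def IsFolnerSeq (F : ℕ → Finset ℤ) : Prop :=
  (∀ n, (F n).Nonempty) ∧
  ∀ k : ℤ, Tendsto
    (fun n => ((symmDiff (F n) ((F n).image (k + ·))).card : ℝ) / (F n).card)
    atTop (nhds 0)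

open Finset Topology

section RelDensity

variable {α : Type*}

noncomputable def relDensity (A : Set α) (F : Finset α) : ℝ :=
  (A ∩ ↑F).ncard / #F

lemma relDensity_nonneg (A : Set α) (F : Finset α) : 0 ≤ relDensity A F := by
  unfold relDensity; positivity

lemma relDensity_le_one (A : Set α) (F : Finset α) : relDensity A F ≤ 1 := by
  unfold relDensity
  refine div_le_one_of_le₀ ?_ (Nat.cast_nonneg _)
  rw [← Set.ncard_coe_finset]
  exact_mod_cast Set.ncard_le_ncard Set.inter_subset_right F.finite_toSet

variable [DecidableEq α]

lemma ncard_inter_le_ncard_inter_add_card_symmDiff (A : Set α) (F G : Finset α) :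
    (A ∩ ↑G).ncard ≤ (A ∩ ↑F).ncard + #(symmDiff F G) := by
  have hsub : A ∩ ↑G ⊆ (A ∩ ↑F) ∪ ↑(G \ F) := by
    intro x hx
    by_cases h : x ∈ F
    · exact Or.inl ⟨hx.1, h⟩
    · exact Or.inr (by simpa using ⟨hx.2, h⟩)
  calc (A ∩ ↑G).ncard ≤ ((A ∩ ↑F) ∪ ↑(G \ F)).ncard :=
        Set.ncard_le_ncard hsub ((F.finite_toSet.inter_of_right A).union (G \ F).finite_toSet)
    _ ≤ (A ∩ ↑F).ncard + #(G \ F) := by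
        rw [← Set.ncard_coe_finset (G \ F)]; exact Set.ncard_union_le _ _
    _ ≤ (A ∩ ↑F).ncard + #(symmDiff F G) := by
        gcongr; rw [symmDiff_def]; exact subset_union_right

variable [AddCancelCommMonoid α]

lemma ncard_inter_image_add (A : Set α) [DecidablePred (· ∈ A)] (F : Finset α) (j : α) :
    (A ∩ ↑(F.image (j + ·))).ncard = #{x ∈ F | j + x ∈ A} := by
  rw [← card_image_of_injective _ (add_right_injective j), ← filter_image,
    ← Set.ncard_coe_finset, coe_filter, Set.inter_comm]
  rfl

lemma relDensity_image_add (A : Set α) (S : Finset α) (x : α) :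
    relDensity A (S.image (x + ·)) = (A ∩ ↑(S.image (x + ·))).ncard / #S := by
  rw [relDensity, card_image_of_injective _ (add_right_injective x)]

lemma sum_ncard_inter_image_add_comm (A : Set α) (F S : Finset α) :
    ∑ j ∈ S, (A ∩ ↑(F.image (j + ·))).ncard =
      ∑ x ∈ F, (A ∩ ↑(S.image (x + ·))).ncard := by
  classical
  simp only [ncard_inter_image_add, card_filter]
  rw [sum_comm]
  simp only [add_comm]

lemma le_relDensity_add_of_le_relDensity_image_add {A : Set α} {F S : Finset α}
    (hF : F.Nonempty) (hS : S.Nonempty) {c : ℝ}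
    (h : ∀ x, c ≤ relDensity A (S.image (x + ·))) :
    c ≤ relDensity A F + (∑ j ∈ S, (#(symmDiff F (F.image (j + ·))) : ℝ) / #F) / #S := by
  have hFpos : (0 : ℝ) < #F := by exact_mod_cast hF.card_pos
  have hSpos : (0 : ℝ) < #S := by exact_mod_cast hS.card_pos
  rw [← sum_div]
  set E := ∑ j ∈ S, (#(symmDiff F (F.image (j + ·))) : ℝ)
  have hcount : c * #S * #F ≤ #S * (A ∩ ↑F).ncard + E :=
    calc c * #S * #F = ∑ _x ∈ F, c * #S := by rw [sum_const, nsmul_eq_mul]; ring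
      _ ≤ ∑ x ∈ F, ((A ∩ ↑(S.image (x + ·))).ncard : ℝ) := by
          gcongr with x
          rw [← le_div_iff₀ hSpos, ← relDensity_image_add]
          exact h x
      _ = ∑ j ∈ S, ((A ∩ ↑(F.image (j + ·))).ncard : ℝ) := by
          exact_mod_cast (sum_ncard_inter_image_add_comm A F S).symm
      _ ≤ ∑ j ∈ S, (((A ∩ ↑F).ncard : ℝ) + #(symmDiff F (F.image (j + ·)))) := by
          gcongr with j
          exact_mod_cast ncard_inter_le_ncard_inter_add_card_symmDiff A F _
      _ = #S * (A ∩ ↑F).ncard + E := by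
          rw [sum_add_distrib, sum_const, nsmul_eq_mul]
  have hrhs : relDensity A F + E / #F / #S = (#S * (A ∩ ↑F).ncard + E) / (#S * #F) := by
    rw [relDensity]
    field_simp
  rw [hrhs, le_div_iff₀ (by positivity)]
  linarith

end RelDensity

lemma le_liminf_relDensity_of_isFolnerSeq {A : Set ℤ} {F : ℕ → Finset ℤ} (hF : IsFolnerSeq F)
    {S : Finset ℤ} (hS : S.Nonempty) {c : ℝ} (h : ∀ x, c ≤ relDensity A (S.image (x + ·))) :
    c ≤ liminf (fun n => relDensity A (F n)) atTop := by
  have herr : Tendsto (fun n =>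
      (∑ j ∈ S, (#(symmDiff (F n) ((F n).image (j + ·))) : ℝ) / #(F n)) / #S) atTop (𝓝 0) := by
    simpa using (tendsto_finsetSum S fun j _ => hF.2 j).div_const (#S : ℝ)
  refine le_of_forall_lt_imp_le_of_dense fun c' hc' => le_liminf_of_le
    (isBoundedUnder_of ⟨1, fun n => relDensity_le_one A (F n)⟩).isCoboundedUnder_ge ?_
  filter_upwards [herr.eventually_lt_const (sub_pos.2 hc')] with n hn
  linarith [le_relDensity_add_of_le_relDensity_image_add (hF.1 n) hS h]

lemma Int.card_symmDiff_Icc_le (a b a' b' : ℤ) :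
    #(symmDiff (Icc a b) (Icc a' b')) ≤ (a - a').natAbs + (b - b').natAbs :=
  calc #(symmDiff (Icc a b) (Icc a' b'))
      ≤ #(Ico (min a a') (max a a') ∪ Ioc (min b b') (max b b')) := by
        refine card_le_card fun x hx => ?_
        simp only [mem_symmDiff, mem_Icc, mem_union, mem_Ico, mem_Ioc] at hx ⊢
        omega
    _ ≤ (a - a').natAbs + (b - b').natAbs := by
        refine (card_union_le _ _).trans ?_
        rw [Int.card_Ico, Int.card_Ioc]
        omega

lemma isFolnerSeq_Icc (q : ℕ → ℤ × ℤ) (hle : ∀ n, (q n).1 ≤ (q n).2)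
    (hlen : Tendsto (fun n => (q n).2 - (q n).1) atTop atTop) :
    IsFolnerSeq fun n => Icc (q n).1 (q n).2 := by
  refine ⟨fun n => nonempty_Icc.2 (hle n), fun k => ?_⟩
  have hcard : ∀ n, (#(Icc (q n).1 (q n).2) : ℝ) = (((q n).2 - (q n).1 : ℤ) : ℝ) + 1 := by
    intro n
    have h := Int.card_Icc_of_le (a := (q n).1) (b := (q n).2) (by linarith [hle n])
    rw [← Int.cast_natCast, h]
    push_cast; ring
  have hcard_top : Tendsto (fun n => (#(Icc (q n).1 (q n).2) : ℝ)) atTop atTop := by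
    simp only [hcard]
    exact tendsto_atTop_add_const_right _ 1 (tendsto_intCast_atTop_iff.2 hlen)
  have hbound : ∀ n,
      (#(symmDiff (Icc (q n).1 (q n).2) ((Icc (q n).1 (q n).2).image (k + ·))) : ℝ)
        ≤ 2 * k.natAbs := by
    intro n
    rw [image_add_left_Icc]
    exact_mod_cast (Int.card_symmDiff_Icc_le _ _ _ _).trans (by omega)
  refine tendsto_of_tendsto_of_tendsto_of_le_of_le tendsto_const_nhds
    ((tendsto_const_nhds (x := (2 * k.natAbs : ℝ))).div_atTop hcard_top)
    (fun n => by positivity) fun n => by gcongr; exact hbound n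

noncomputable def intervalsAtTop : Filter (ℤ × ℤ) :=
  comap (fun q => q.2 - q.1) atTop

instance : intervalsAtTop.IsCountablyGenerated := by
  unfold intervalsAtTop; infer_instance

instance : intervalsAtTop.NeBot :=
  atTop_neBot.comap_of_surj fun m => ⟨(0, m), sub_zero m⟩

lemma eventually_intervalsAtTop {p : ℤ × ℤ → Prop} :
    (∀ᶠ q in intervalsAtTop, p q) ↔ ∃ M, ∀ q : ℤ × ℤ, M ≤ q.2 - q.1 → p q := by
  simp only [intervalsAtTop, eventually_comap, eventually_atTop]
  exact ⟨fun ⟨M, hM⟩ => ⟨M, fun q hq => hM _ hq q rfl⟩,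
    fun ⟨M, hM⟩ => ⟨M, fun _ hb q hq => hM q (hq ▸ hb)⟩⟩

noncomputable def intervalDensity (A : Set ℤ) (q : ℤ × ℤ) : ℝ :=
  (A ∩ Set.Icc q.1 q.2).ncard / ((q.2 : ℝ) - q.1 + 1)

lemma intervalDensity_eq_relDensity (A : Set ℤ) {a b : ℤ} (hab : a ≤ b) :
    intervalDensity A (a, b) = relDensity A (Icc a b) := by
  have hcard := Int.card_Icc_of_le (a := a) (b := b) (by omega)
  rw [intervalDensity, relDensity, coe_Icc, ← Int.cast_natCast (#(Icc a b)), hcard]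
  push_cast; ring_nf

lemma eventually_intervalDensity_eq_relDensity (A : Set ℤ) :
    ∀ᶠ q in intervalsAtTop, intervalDensity A q = relDensity A (Icc q.1 q.2) :=
  eventually_intervalsAtTop.2 ⟨0, fun q hq => intervalDensity_eq_relDensity A (by omega)⟩

lemma isBoundedUnder_ge_intervalDensity (A : Set ℤ) :
    IsBoundedUnder (· ≥ ·) intervalsAtTop (intervalDensity A) :=
  isBoundedUnder_of_eventually_ge <| (eventually_intervalDensity_eq_relDensity A).mono
    fun _ hq => hq ▸ relDensity_nonneg A _

lemma isBoundedUnder_le_intervalDensity (A : Set ℤ) :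
    IsBoundedUnder (· ≤ ·) intervalsAtTop (intervalDensity A) :=
  isBoundedUnder_of_eventually_le <| (eventually_intervalDensity_eq_relDensity A).mono
    fun _ hq => hq ▸ relDensity_le_one A _

lemma liminf_intervalDensity_le_liminf_relDensity (A : Set ℤ) {F : ℕ → Finset ℤ}
    (hF : IsFolnerSeq F) :
    liminf (intervalDensity A) intervalsAtTop ≤ liminf (fun n => relDensity A (F n)) atTop := by
  refine le_of_forall_lt_imp_le_of_dense fun c hc => ?_
  obtain ⟨M, hM⟩ := eventually_intervalsAtTop.1
    (eventually_lt_of_lt_liminf hc (isBoundedUnder_ge_intervalDensity A))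
  refine le_liminf_relDensity_of_isFolnerSeq hF (S := Icc 0 (max M 0))
    (nonempty_Icc.2 (le_max_right M 0)) fun x => ?_
  rw [image_add_left_Icc, add_zero,
    ← intervalDensity_eq_relDensity A (le_add_of_nonneg_right (le_max_right M 0))]
  exact (hM (x, x + max M 0) (by simp)).le

lemma exists_isFolnerSeq_liminf_relDensity_le (A : Set ℤ) {c : ℝ}
    (hc : liminf (intervalDensity A) intervalsAtTop < c) :
    ∃ F : ℕ → Finset ℤ, IsFolnerSeq F ∧ liminf (fun n => relDensity A (F n)) atTop ≤ c := by
  have hfreq : ∃ᶠ q in intervalsAtTop, intervalDensity A q < c ∧ q.1 ≤ q.2 :=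
    (frequently_lt_of_liminf_lt (isBoundedUnder_le_intervalDensity A).isCoboundedUnder_ge
      hc).and_eventually (eventually_intervalsAtTop.2 ⟨0, fun q hq => by omega⟩)
  obtain ⟨q, hq_tendsto, hq⟩ := frequently_iff_seq_forall.1 hfreq
  refine ⟨fun n => Icc (q n).1 (q n).2,
    isFolnerSeq_Icc q (fun n => (hq n).2) (tendsto_comap_iff.1 hq_tendsto), ?_⟩
  refine liminf_le_of_frequently_le (Frequently.of_forall fun n => ?_)
    (isBoundedUnder_of ⟨0, fun _ => relDensity_nonneg A _⟩)
  rw [← intervalDensity_eq_relDensity A (hq n).2]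
  exact (hq n).1.le

/-- For every `A ⊆ ℤ`, the interval lower Banach density
`liminf_{b-a→∞} |A ∩ {a,…,b}| / (b-a+1)` equals the infimum over all Følner sequences
`(F n)` for `ℤ` of `liminf_n |A ∩ F n| / |F n|`. -/
theorem interval_lowerBanachDensity_eq_inf_folner (A : Set ℤ) :
    Filter.liminf
        (fun q : ℤ × ℤ => (Set.ncard (A ∩ Set.Icc q.1 q.2) : ℝ) / ((q.2 : ℝ) - q.1 + 1))
        (Filter.comap (fun q : ℤ × ℤ => q.2 - q.1) atTop)
      = sInf {x : ℝ | ∃ F : ℕ → Finset ℤ, IsFolnerSeq F ∧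
          x = Filter.liminf (fun n => (Set.ncard (A ∩ ↑(F n)) : ℝ) / (F n).card) atTop} := by
  change liminf (intervalDensity A) intervalsAtTop =
    sInf {x | ∃ F, IsFolnerSeq F ∧ x = liminf (fun n => relDensity A (F n)) atTop}
  set S := {x | ∃ F, IsFolnerSeq F ∧ x = liminf (fun n => relDensity A (F n)) atTop}
  have hlower : ∀ x ∈ S, liminf (intervalDensity A) intervalsAtTop ≤ x := by
    rintro _ ⟨F, hF, rfl⟩
    exact liminf_intervalDensity_le_liminf_relDensity A hF
  obtain ⟨F₀, hF₀, -⟩ := exists_isFolnerSeq_liminf_relDensity_le A (lt_add_one _)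
  have hne : S.Nonempty := ⟨_, F₀, hF₀, rfl⟩
  refine (eq_of_le_of_forall_lt_imp_le_of_dense (le_csInf hne hlower) fun c hc => ?_).symm
  obtain ⟨F, hF, hFc⟩ := exists_isFolnerSeq_liminf_relDensity_le A hc
  exact (csInf_le ⟨_, hlower⟩ ⟨F, hF, rfl⟩).trans hFc
end

section
/- (Van der Corput lemma for amenable groups) Let Γ be a discrete amenable group with left Følner net (Φ_α)_{α∈A}, let H be a Hilbert space, and let {f_γ : γ ∈ Γ} ⊆ H with sup_γ ‖f_γ‖ < ∞. If lim_{α} (1/|Φ_α|²) · limsup_{β} (1/|Φ_β|) Σ_{γ∈Φ_β} Σ_{η,ρ∈Φ_α} ⟨f_{ηγ}, f_{ργ}⟩ = 0, then lim_α ‖(1/|Φ_α|) Σ_{γ∈Φ_α} f_γ‖ = 0. -/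
open Filter

/-!
The Følner property makes averages over `Φ β` asymptotically invariant under left translation
by each `η ∈ Φ α`, so for large `β`, `|Φ α|` times the average of `f` over `Φ β` is close to the
average over `Φ β` of `F γ := ∑_{η ∈ Φ α} f (η γ)`. By Cauchy–Schwarz, the squared norm of that
average is at most the average of `‖F γ‖²`, and expanding `‖F γ‖²` as a double sum of inner
products gives exactly the correlation sums of the hypothesis.
-/

open Finset Topology
open scoped symmDiff

lemma norm_sum_sub_sum_le_mul_card_symmDiff {α E : Type*} [DecidableEq α]
    [SeminormedAddCommGroup E] {f : α → E} {C : ℝ} (hf : ∀ x, ‖f x‖ ≤ C) (A B : Finset α) :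
    ‖∑ x ∈ A, f x - ∑ x ∈ B, f x‖ ≤ C * #(A ∆ B) := by
  rw [← sum_sdiff_sub_sum_sdiff]
  calc ‖∑ x ∈ A \ B, f x - ∑ x ∈ B \ A, f x‖
      ≤ ∑ x ∈ A \ B, ‖f x‖ + ∑ x ∈ B \ A, ‖f x‖ :=
        (norm_sub_le _ _).trans (add_le_add (norm_sum_le _ _) (norm_sum_le _ _))
    _ = ∑ x ∈ A ∆ B, ‖f x‖ := (sum_union disjoint_sdiff_sdiff).symm
    _ ≤ C * #(A ∆ B) := by
        simpa [mul_comm] using sum_le_card_nsmul _ _ C fun x _ => hf x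

lemma norm_average_sq_le {ι E : Type*} [SeminormedAddCommGroup E] [NormedSpace ℝ E]
    (s : Finset ι) (v : ι → E) :
    ‖(1 / (#s : ℝ)) • ∑ i ∈ s, v i‖ ^ 2 ≤ (1 / (#s : ℝ)) * ∑ i ∈ s, ‖v i‖ ^ 2 := by
  calc ‖(1 / (#s : ℝ)) • ∑ i ∈ s, v i‖ ^ 2 ≤ ((∑ i ∈ s, ‖v i‖) / #s) ^ 2 := by
        rw [norm_smul, Real.norm_of_nonneg (by positivity), one_div_mul_eq_div]
        gcongr
        exact norm_sum_le _ _
    _ ≤ (1 / (#s : ℝ)) * ∑ i ∈ s, ‖v i‖ ^ 2 := by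
        rw [one_div_mul_eq_div]
        exact sum_div_card_sq_le_sum_sq_div_card

lemma eventually_norm_average_sq_lt_of_limsup_lt {ι κ E : Type*} [SeminormedAddCommGroup E]
    [NormedSpace ℝ E] {l : Filter ι} (s : ι → Finset κ) {v : κ → E} {M r : ℝ}
    (hv : ∀ i, ‖v i‖ ≤ M)
    (hr : limsup (fun β => (1 / (#(s β) : ℝ)) * ∑ i ∈ s β, ‖v i‖ ^ 2) l < r) :
    ∀ᶠ β in l, ‖(1 / (#(s β) : ℝ)) • ∑ i ∈ s β, v i‖ ^ 2 < r := by
  have hbdd : IsBoundedUnder (· ≤ ·) l fun β => (1 / (#(s β) : ℝ)) * ∑ i ∈ s β, ‖v i‖ ^ 2 := by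
    refine isBoundedUnder_of ⟨M ^ 2, fun β => ?_⟩
    rw [one_div_mul_eq_div]
    refine div_le_of_le_mul₀ (by positivity) (by positivity) ?_
    simpa [mul_comm] using
      sum_le_card_nsmul _ _ _ fun i _ => pow_le_pow_left₀ (norm_nonneg _) (hv i) 2
  filter_upwards [eventually_lt_of_limsup_lt hr hbdd] with β hβ
  exact (norm_average_sq_le _ _).trans_lt hβ

lemma sum_sum_real_inner_eq_norm_sum_sq {ι E : Type*} [NormedAddCommGroup E]
    [InnerProductSpace ℝ E] (s : Finset ι) (v : ι → E) :
    ∑ i ∈ s, ∑ j ∈ s, inner ℝ (v i) (v j) = ‖∑ i ∈ s, v i‖ ^ 2 := by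
  rw [← real_inner_self_eq_norm_sq, sum_inner]
  simp_rw [inner_sum]

namespace IsFolnerNet

variable {G ι E : Type} [Group G] [DecidableEq G] [Preorder ι] [SeminormedAddCommGroup E]
  [NormedSpace ℝ E] {Φ : ι → Finset G} {f : G → E} {C : ℝ}

theorem tendsto_average_sub_average_translate (hΦ : IsFolnerNet Φ) (hf : ∀ γ, ‖f γ‖ ≤ C)
    (η : G) :
    Tendsto (fun β => (1 / (#(Φ β) : ℝ)) • ∑ γ ∈ Φ β, f γ
      - (1 / (#(Φ β) : ℝ)) • ∑ γ ∈ Φ β, f (η * γ)) atTop (𝓝 0) := by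
  refine squeeze_zero_norm (fun β => ?_) (by simpa only [mul_zero] using (hΦ.2 η).const_mul C)
  rw [← smul_sub, ← sum_image fun a _ b _ h => mul_left_cancel h, norm_smul,
    Real.norm_of_nonneg (by positivity), mul_div_assoc', one_div_mul_eq_div]
  gcongr
  exact norm_sum_sub_sum_le_mul_card_symmDiff hf _ _

theorem tendsto_card_smul_average_sub_average_sum_translate (hΦ : IsFolnerNet Φ)
    (hf : ∀ γ, ‖f γ‖ ≤ C) (K : Finset G) :
    Tendsto (fun β => (#K : ℝ) • ((1 / (#(Φ β) : ℝ)) • ∑ γ ∈ Φ β, f γ)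
      - (1 / (#(Φ β) : ℝ)) • ∑ γ ∈ Φ β, ∑ η ∈ K, f (η * γ)) atTop (𝓝 0) := by
  have h := tendsto_finsetSum K fun η _ => hΦ.tendsto_average_sub_average_translate hf η
  rw [sum_const_zero] at h
  refine h.congr fun β => ?_
  simp only [sum_sub_distrib, sum_const, Nat.cast_smul_eq_nsmul, smul_sum]
  rw [sum_comm]

end IsFolnerNet

/-- Van der Corput lemma for amenable groups: if the averaged correlations of a bounded
family `{f γ}` in a Hilbert space vanish along the Følner net, then the Følner averages
of the `f γ` tend to `0` in norm. -/
theorem vanDerCorput_amenable {G ι H : Type} [Group G] [DecidableEq G]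
    [Preorder ι] [IsDirected ι (· ≤ ·)] [Nonempty ι]
    [NormedAddCommGroup H] [InnerProductSpace ℝ H]
    (Φ : ι → Finset G) (hΦ : IsFolnerNet Φ)
    (f : G → H) (C : ℝ) (hbd : ∀ γ : G, ‖f γ‖ ≤ C)
    (hcorr : Tendsto
      (fun α => (1 / ((Φ α).card : ℝ) ^ 2) *
        Filter.limsup
          (fun β => (1 / ((Φ β).card : ℝ)) *
            ∑ γ ∈ Φ β, ∑ η ∈ Φ α, ∑ ρ ∈ Φ α, (inner ℝ (f (η * γ)) (f (ρ * γ)) : ℝ))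
          atTop)
      atTop (nhds 0)) :
    Tendsto (fun α => ‖(1 / ((Φ α).card : ℝ)) • ∑ γ ∈ Φ α, f γ‖) atTop (nhds 0) := by
  rw [NormedAddGroup.tendsto_nhds_zero]
  intro ε hε
  obtain ⟨α, hα⟩ := (hcorr.eventually (gt_mem_nhds (by positivity : (0 : ℝ) < (ε / 2) ^ 2))).exists
  set K := Φ α
  have hK : (0 : ℝ) < #K := by exact_mod_cast (hΦ.1 α).card_pos
  simp_rw [sum_sum_real_inner_eq_norm_sum_sq] at hα
  rw [one_div_mul_eq_div, div_lt_iff₀ (by positivity), ← mul_pow, mul_comm] at hα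
  have hsmall := eventually_norm_average_sq_lt_of_limsup_lt Φ
    (fun γ => norm_sum_le_of_le K fun η _ => hbd (η * γ)) hα
  have hclose := NormedAddGroup.tendsto_nhds_zero.1
    (hΦ.tendsto_card_smul_average_sub_average_sum_translate hbd K) (#K * (ε / 2)) (by positivity)
  filter_upwards [hsmall, hclose] with β hsmall hclose
  set S := (1 / (#(Φ β) : ℝ)) • ∑ γ ∈ Φ β, f γ
  set T := (1 / (#(Φ β) : ℝ)) • ∑ γ ∈ Φ β, ∑ η ∈ K, f (η * γ)
  clear_value S T
  rw [norm_norm]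
  refine lt_of_mul_lt_mul_left ?_ hK.le
  calc #K * ‖S‖ = ‖(#K : ℝ) • S‖ := by rw [norm_smul, Real.norm_of_nonneg hK.le]
    _ ≤ ‖T‖ + ‖(#K : ℝ) • S - T‖ := norm_le_insert' _ _
    _ < #K * (ε / 2) + #K * (ε / 2) :=
        add_lt_add (lt_of_pow_lt_pow_left₀ 2 (by positivity) hsmall) hclose
    _ = #K * ε := by ring
end

section
/- Every solvable group is uniformly amenable; moreover, subgroups, homomorphic images, and finite direct products of uniformly amenable groups are uniformly amenable. Concretely: if Γ is uniformly amenable with Følner function F and H ≤ Γ is a subgroup, then H is uniformly amenable (with a Følner function depending only on F). -/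
/-- `G` is uniformly amenable with Følner function `F`: for every finite `Ψ ⊆ G` with
`|Ψ| ≤ n` and every `0 < ε < 1` there is a non-empty finite `Φ ⊆ G` with
`|Φ| ≤ F n ε` and `|Φ ∆ γΦ| ≤ ε|Φ|` for all `γ ∈ Ψ`. -/
def IsUnifAmenableWith (G : Type) [Group G] [DecidableEq G] (F : ℕ → ℝ → ℕ) : Prop :=
  ∀ (Ψ : Finset G) (n : ℕ) (ε : ℝ), Ψ.card ≤ n → 0 < ε → ε < 1 →
    ∃ Φ : Finset G, Φ.Nonempty ∧ Φ.card ≤ F n ε ∧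
      ∀ γ ∈ Ψ, ((symmDiff Φ (Φ.image (γ * ·))).card : ℝ) ≤ ε * Φ.card

/-- `G` is uniformly amenable. -/
def IsUnifAmenable (G : Type) [Group G] [DecidableEq G] : Prop :=
  ∃ F : ℕ → ℝ → ℕ, IsUnifAmenableWith G F

open Finset Function
open scoped Pointwise symmDiff

/-!
Følner sets of uniformly bounded size pass to subgroups and images by cutting a Følner set into
pieces whose boundaries add up to at most its own, and pigeonholing over the pieces (after summing
the boundaries over `Ψ`, which costs a factor `|Ψ|`). For a subgroup `H` the pieces are the traces
`Φ ∩ Hx` on right cosets, which left multiplication by `H` preserves; a good piece translated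
into `H` is the Følner set there. For a surjection `φ` the pieces are the level sets
`{k | t ≤ |Φ ∩ φ⁻¹ k|}` of the fibre counts (layer-cake decomposition). For products, and for
extensions of `Q = G ⧸ N` by `N`, take products `B × A` of Følner sets, placed in `G` along a
transversal of `N`: left multiplication by `γ` moves the `Q`-coordinate by `γN` and the
`N`-coordinate by one of at most `|Ψ| |B|` elements. Abelian groups are images of `ℤ^Ψ`, where
boxes `[0, L)^Ψ` are `2/L`-Følner, and solvable groups are iterated extensions of abelian ones.
-/

section Folner

variable {G : Type*} [Group G] [DecidableEq G]

def IsFolnerSet (Ψ : Finset G) (ε : ℝ) (Φ : Finset G) : Prop :=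
  ∀ γ ∈ Ψ, (#(Φ ∆ (γ • Φ)) : ℝ) ≤ ε * #Φ

theorem isUnifAmenableWith_iff {G : Type} [Group G] [DecidableEq G] {F : ℕ → ℝ → ℕ} :
    IsUnifAmenableWith G F ↔ ∀ (Ψ : Finset G) (n : ℕ) (ε : ℝ), #Ψ ≤ n → 0 < ε → ε < 1 →
      ∃ Φ : Finset G, Φ.Nonempty ∧ #Φ ≤ F n ε ∧ IsFolnerSet Ψ ε Φ :=
  Iff.rfl

theorem IsFolnerSet.mono {Ψ Φ : Finset G} {ε ε' : ℝ} (h : IsFolnerSet Ψ ε Φ) (hε : ε ≤ ε') :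
    IsFolnerSet Ψ ε' Φ :=
  fun γ hγ => (h γ hγ).trans (mul_le_mul_of_nonneg_right hε (Nat.cast_nonneg _))

theorem card_symmDiff_eq_two_mul_card_sdiff {α : Type*} [DecidableEq α] {s t : Finset α}
    (h : #s = #t) : #(s ∆ t) = 2 * #(t \ s) := by
  rw [symmDiff_def, sup_eq_union, card_union_of_disjoint disjoint_sdiff_sdiff,
    card_sdiff_comm h]
  ring

theorem card_symmDiff_smul_finset (γ : G) (Φ : Finset G) :
    #(Φ ∆ (γ • Φ)) = 2 * #{x ∈ Φ | γ * x ∉ Φ} := by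
  rw [card_symmDiff_eq_two_mul_card_sdiff (card_smul_finset γ Φ).symm, sdiff_eq_filter,
    smul_finset_def, filter_image, image_smul, card_smul_finset]
  simp only [smul_eq_mul]

end Folner

section Pieces

variable {G : Type*} [Group G] [DecidableEq G]

theorem exists_pos_le_mul_of_sum_le {ι : Type*} {I : Finset ι} {w : ι → ℕ} {c : ι → ℝ}
    {δ : ℝ} (hc : ∀ i ∈ I, 0 ≤ c i) (hw : 0 < ∑ i ∈ I, w i)
    (h : ∑ i ∈ I, c i ≤ δ * ∑ i ∈ I, (w i : ℝ)) : ∃ i ∈ I, 0 < w i ∧ c i ≤ δ * w i := by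
  by_contra! hbad
  obtain ⟨i₀, hi₀, hw₀⟩ := exists_lt_of_sum_lt (f := fun _ => 0) (by simpa using hw)
  have : δ * ∑ i ∈ I, (w i : ℝ) < ∑ i ∈ I, c i := by
    rw [mul_sum]
    refine sum_lt_sum (fun i hi => ?_) ⟨i₀, hi₀, hbad i₀ hi₀ hw₀⟩
    rcases (w i).eq_zero_or_pos with h0 | hpos
    · simpa [h0] using hc i hi
    · exact (hbad i hi hpos).le
  linarith

theorem exists_isFolnerSet_of_sum_le {ι : Type*} (I : Finset ι) (P : ι → Finset G)
    (Ψ : Finset G) {δ : ℝ} (hpos : 0 < ∑ i ∈ I, #(P i))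
    (h : ∀ γ ∈ Ψ, ∑ i ∈ I, (#(P i ∆ (γ • P i)) : ℝ) ≤ δ * ∑ i ∈ I, (#(P i) : ℝ)) :
    ∃ i ∈ I, (P i).Nonempty ∧ IsFolnerSet Ψ (#Ψ * δ) (P i) := by
  have htotal : ∑ i ∈ I, ∑ γ ∈ Ψ, (#(P i ∆ (γ • P i)) : ℝ)
      ≤ (#Ψ * δ) * ∑ i ∈ I, (#(P i) : ℝ) := by
    rw [sum_comm, mul_assoc, ← nsmul_eq_mul]
    exact sum_le_card_nsmul _ _ _ h
  obtain ⟨i, hi, hne, hle⟩ := exists_pos_le_mul_of_sum_le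
    (fun i _ => sum_nonneg fun γ _ => Nat.cast_nonneg _) hpos htotal
  refine ⟨i, hi, card_pos.mp hne, fun γ hγ => le_trans ?_ hle⟩
  exact single_le_sum (f := fun γ => (#(P i ∆ (γ • P i)) : ℝ))
    (fun _ _ => Nat.cast_nonneg _) hγ

end Pieces

section Subgroup

variable {G : Type*} [Group G] [DecidableEq G]

theorem IsFolnerSet.op_smul {Ψ Φ : Finset G} {ε : ℝ} (h : IsFolnerSet Ψ ε Φ) (x : G) :
    IsFolnerSet Ψ ε (MulOpposite.op x • Φ) := by
  intro γ hγ
  rw [smul_comm γ, ← smul_finset_symmDiff, card_smul_finset, card_smul_finset]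
  exact h γ hγ

theorem isFolnerSet_image_iff {K : Type*} [Group K] [DecidableEq K] {f : G →* K}
    (hf : Injective f) {Ψ Φ : Finset G} {ε : ℝ} :
    IsFolnerSet (Ψ.image f) ε (Φ.image f) ↔ IsFolnerSet Ψ ε Φ := by
  simp only [IsFolnerSet, forall_mem_image, ← image_smul_distrib, ← image_symmDiff _ _ hf,
    card_image_of_injective _ hf]

theorem filter_symmDiff {α : Type*} [DecidableEq α] (p : α → Prop) [DecidablePred p]
    (s t : Finset α) : {x ∈ s ∆ t | p x} = {x ∈ s | p x} ∆ {x ∈ t | p x} := by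
  ext x
  simp only [mem_filter, mem_symmDiff]
  tauto

theorem sum_card_symmDiff_fiber {β : Type*} [DecidableEq β] (q : G → β) {γ : G}
    (hq : ∀ x, q (γ * x) = q x) (Φ : Finset G) :
    ∑ k ∈ Φ.image q, #({x ∈ Φ | q x = k} ∆ (γ • {x ∈ Φ | q x = k})) = #(Φ ∆ (γ • Φ)) := by
  have hmaps : ∀ x ∈ Φ ∆ (γ • Φ), q x ∈ Φ.image q := by
    intro x hx
    rcases mem_symmDiff.mp hx with ⟨hx, -⟩ | ⟨hx, -⟩
    · exact mem_image_of_mem q hx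
    · obtain ⟨y, hy, rfl⟩ := mem_smul_finset.mp hx
      exact mem_image.mpr ⟨y, hy, (hq y).symm⟩
  have hsmul : ∀ k, {x ∈ γ • Φ | q x = k} = γ • {x ∈ Φ | q x = k} := by
    simp only [smul_finset_def, filter_image, smul_eq_mul, hq, implies_true]
  rw [card_eq_sum_card_fiberwise hmaps]
  exact sum_congr rfl fun k _ => by rw [filter_symmDiff, hsmul]

theorem exists_isFolnerSet_subgroup (H : Subgroup G) (Ψ : Finset H) {Φ : Finset G}
    (hΦ : Φ.Nonempty) {δ : ℝ} (h : ∀ γ ∈ Ψ, (#(Φ ∆ ((γ : G) • Φ)) : ℝ) ≤ δ * #Φ) :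
    ∃ Φ' : Finset H, Φ'.Nonempty ∧ #Φ' ≤ #Φ ∧ IsFolnerSet Ψ (#Ψ * δ) Φ' := by
  classical
  let q : G → Quotient (QuotientGroup.rightRel H) := Quotient.mk _
  have hq : ∀ γ ∈ H, ∀ x, q (γ * x) = q x := fun γ hγ x =>
    Quotient.sound (QuotientGroup.rightRel_apply.mpr (by simpa using H.inv_mem hγ))
  have hfibers := card_eq_sum_card_fiberwise fun x (hx : x ∈ Φ) => mem_image_of_mem q hx
  obtain ⟨k, -, ⟨x₀, hx₀⟩, hfolner⟩ := exists_isFolnerSet_of_sum_le (Φ.image q)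
    (fun k => {x ∈ Φ | q x = k}) (Ψ.image H.subtype) (δ := δ) (hfibers ▸ card_pos.mpr hΦ) <| by
      simp only [forall_mem_image, H.subtype_apply]
      intro γ hγ
      rw [← Nat.cast_sum, ← Nat.cast_sum, sum_card_symmDiff_fiber q (hq γ γ.2), ← hfibers]
      exact h γ hγ
  set P := {x ∈ Φ | q x = k}
  have hPH : ∀ x ∈ MulOpposite.op x₀⁻¹ • P, x ∈ H := by
    intro x hx
    obtain ⟨y, hy, rfl⟩ := mem_smul_finset.mp hx
    have hyx₀ : q y = q x₀ := (mem_filter.mp hy).2.trans (mem_filter.mp hx₀).2.symm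
    simpa using QuotientGroup.rightRel_apply.mp (Quotient.exact hyx₀.symm)
  have hmap : ((MulOpposite.op x₀⁻¹ • P).subtype (· ∈ H)).image H.subtype =
      MulOpposite.op x₀⁻¹ • P :=
    (map_eq_image _ _).symm.trans (subtype_map_of_mem hPH)
  refine ⟨(MulOpposite.op x₀⁻¹ • P).subtype (· ∈ H), ?_, ?_, ?_⟩
  · exact ⟨⟨_, hPH _ (smul_mem_smul_finset hx₀)⟩, mem_subtype.mpr (smul_mem_smul_finset hx₀)⟩
  · rw [← card_image_of_injective _ H.subtype_injective, hmap, card_smul_finset]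
    exact card_le_card (filter_subset _ _)
  · rw [← isFolnerSet_image_iff H.subtype_injective, hmap,
      ← card_image_of_injective Ψ H.subtype_injective]
    exact hfolner.op_smul _

end Subgroup

section LayerCake

variable {β : Type*}

theorem sum_card_filter_comm {α : Type*} (s : Finset α) (D : Finset β) (p : α → β → Prop)
    [∀ a b, Decidable (p a b)] :
    ∑ a ∈ s, #{k ∈ D | p a k} = ∑ k ∈ D, #{a ∈ s | p a k} := by
  simp only [card_filter]
  exact sum_comm

theorem sum_card_filter_le_eq_sum (D : Finset β) {f : β → ℕ} {M : ℕ}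
    (hf : ∀ k ∈ D, f k ≤ M) : ∑ t ∈ Icc 1 M, #{k ∈ D | t ≤ f k} = ∑ k ∈ D, f k := by
  rw [sum_card_filter_comm]
  refine sum_congr rfl fun k hk => ?_
  have : {t ∈ Icc 1 M | t ≤ f k} = Icc 1 (f k) := by
    ext t
    simp only [mem_filter, mem_Icc]
    have := hf k hk
    omega
  rw [this, Nat.card_Icc, Nat.add_sub_cancel]

theorem sum_card_symmDiff_filter_le [DecidableEq β] (D : Finset β) {f g : β → ℕ} {M : ℕ}
    (hf : ∀ k ∈ D, f k ≤ M) (hg : ∀ k ∈ D, g k ≤ M) :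
    ∑ t ∈ Icc 1 M, #({k ∈ D | t ≤ f k} ∆ {k ∈ D | t ≤ g k}) =
      ∑ k ∈ D, ((f k - g k) + (g k - f k)) := by
  have hxor : ∀ t, {k ∈ D | t ≤ f k} ∆ {k ∈ D | t ≤ g k} = {k ∈ D | ¬(t ≤ f k ↔ t ≤ g k)} := by
    intro t
    ext k
    simp only [mem_symmDiff, mem_filter]
    tauto
  simp only [hxor]
  rw [sum_card_filter_comm]
  refine sum_congr rfl fun k hk => ?_
  have : {t ∈ Icc 1 M | ¬(t ≤ f k ↔ t ≤ g k)} = Ioc (min (f k) (g k)) (max (f k) (g k)) := by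
    ext t
    simp only [mem_filter, mem_Icc, mem_Ioc]
    have := hf k hk
    have := hg k hk
    omega
  rw [this, Nat.card_Ioc]
  omega

end LayerCake

section Fibers

variable {α β : Type*} [DecidableEq β]

def fiberCard (f : α → β) (S : Finset α) (b : β) : ℕ := #{x ∈ S | f x = b}

theorem fiberCard_le_card (f : α → β) (S : Finset α) (b : β) : fiberCard f S b ≤ #S :=
  card_filter_le _ _

theorem fiberCard_le_fiberCard_add_symmDiff [DecidableEq α] (f : α → β) (S T : Finset α)
    (b : β) : fiberCard f S b ≤ fiberCard f T b + fiberCard f (S ∆ T) b := by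
  have hS : S ⊆ T ∪ S ∆ T := fun x hx => by
    by_cases hxT : x ∈ T
    · exact mem_union_left _ hxT
    · exact mem_union_right _ (mem_symmDiff.mpr (Or.inl ⟨hx, hxT⟩))
  calc fiberCard f S b ≤ fiberCard f (T ∪ S ∆ T) b := card_le_card (filter_subset_filter _ hS)
    _ ≤ _ := by rw [fiberCard, filter_union]; exact card_union_le _ _

def levelSet (f : α → β) (S : Finset α) (t : ℕ) : Finset β :=
  {b ∈ S.image f | t ≤ fiberCard f S b}

theorem card_levelSet_le (f : α → β) (S : Finset α) (t : ℕ) : #(levelSet f S t) ≤ #S :=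
  (card_filter_le _ _).trans card_image_le

theorem levelSet_eq_filter (f : α → β) {S : Finset α} {t : ℕ} (ht : 1 ≤ t) {D : Finset β}
    (hD : S.image f ⊆ D) : levelSet f S t = {b ∈ D | t ≤ fiberCard f S b} := by
  ext b
  simp only [levelSet, mem_filter]
  refine ⟨fun h => ⟨hD h.1, h.2⟩, fun h => ⟨?_, h.2⟩⟩
  obtain ⟨x, hx⟩ := card_pos.mp (lt_of_lt_of_le ht h.2)
  exact mem_image.mpr ⟨x, (mem_filter.mp hx).1, (mem_filter.mp hx).2⟩

theorem sum_card_levelSet (f : α → β) (S : Finset α) :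
    ∑ t ∈ Icc 1 #S, #(levelSet f S t) = #S := by
  simp only [levelSet]
  rw [sum_card_filter_le_eq_sum _ fun b _ => fiberCard_le_card f S b]
  exact (card_eq_sum_card_fiberwise fun x hx => mem_image_of_mem f hx).symm

end Fibers

section Pushforward

variable {G K : Type*} [Group G] [DecidableEq G] [Group K] [DecidableEq K]

theorem fiberCard_smul_finset (φ : G →* K) (S : Finset G) (g : G) (k : K) :
    fiberCard φ (g • S) k = fiberCard φ S ((φ g)⁻¹ * k) := by
  rw [fiberCard, fiberCard, smul_finset_def, filter_image, image_smul, card_smul_finset]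
  simp only [smul_eq_mul, map_mul, eq_inv_mul_iff_mul_eq]

theorem smul_levelSet (φ : G →* K) (Φ : Finset G) (g : G) (t : ℕ) :
    φ g • levelSet φ Φ t = levelSet φ (g • Φ) t := by
  rw [levelSet, levelSet, image_smul_distrib]
  conv_rhs => rw [smul_finset_def (a := φ g), filter_image, image_smul]
  simp only [fiberCard_smul_finset, smul_eq_mul, inv_mul_cancel_left]

theorem sum_card_symmDiff_levelSet_le (φ : G →* K) (Φ : Finset G) (g : G) :
    ∑ t ∈ Icc 1 #Φ, #(levelSet φ Φ t ∆ (φ g • levelSet φ Φ t)) ≤ #(Φ ∆ (g • Φ)) := by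
  set D := (Φ ∪ g • Φ).image φ
  have hfilter : ∀ t ∈ Icc 1 #Φ, levelSet φ Φ t ∆ (φ g • levelSet φ Φ t) =
      {k ∈ D | t ≤ fiberCard φ Φ k} ∆ {k ∈ D | t ≤ fiberCard φ (g • Φ) k} := by
    intro t ht
    have ht : 1 ≤ t := (mem_Icc.mp ht).1
    rw [smul_levelSet, levelSet_eq_filter φ ht (image_subset_image subset_union_left),
      levelSet_eq_filter φ ht (image_subset_image subset_union_right)]
  rw [sum_congr rfl fun t ht => congrArg card (hfilter t ht),
    sum_card_symmDiff_filter_le D (fun k _ => fiberCard_le_card φ Φ k)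
      (fun k _ => card_smul_finset g Φ ▸ fiberCard_le_card φ (g • Φ) k)]
  calc ∑ k ∈ D, ((fiberCard φ Φ k - fiberCard φ (g • Φ) k) +
        (fiberCard φ (g • Φ) k - fiberCard φ Φ k))
      ≤ ∑ k ∈ D, fiberCard φ (Φ ∆ (g • Φ)) k := by
        refine sum_le_sum fun k _ => ?_
        have h₁ := fiberCard_le_fiberCard_add_symmDiff φ Φ (g • Φ) k
        have h₂ := fiberCard_le_fiberCard_add_symmDiff φ (g • Φ) Φ k
        rw [symmDiff_comm] at h₂
        omega
    _ = #(Φ ∆ (g • Φ)) :=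
        (card_eq_sum_card_fiberwise fun x hx =>
          mem_image_of_mem φ (symmDiff_le_sup (α := Finset G) hx)).symm

theorem exists_isFolnerSet_of_map (φ : G →* K) (Ψ : Finset K) {Φ : Finset G}
    (hΦ : Φ.Nonempty) {δ : ℝ} (h : ∀ γ ∈ Ψ, ∃ g, φ g = γ ∧ (#(Φ ∆ (g • Φ)) : ℝ) ≤ δ * #Φ) :
    ∃ Φ' : Finset K, Φ'.Nonempty ∧ #Φ' ≤ #Φ ∧ IsFolnerSet Ψ (#Ψ * δ) Φ' := by
  have hsum := sum_card_levelSet φ Φ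
  obtain ⟨t, -, hne, hfolner⟩ := exists_isFolnerSet_of_sum_le (Icc 1 #Φ) (levelSet φ Φ) Ψ
    (δ := δ) (by rw [hsum]; exact card_pos.mpr hΦ) <| by
      intro γ hγ
      obtain ⟨g, rfl, hg⟩ := h γ hγ
      rw [← Nat.cast_sum, ← Nat.cast_sum, hsum]
      exact le_trans (Nat.cast_le.mpr (sum_card_symmDiff_levelSet_le φ Φ g)) hg
  exact ⟨_, hne, card_levelSet_le φ Φ t, hfolner⟩

end Pushforward

section TwistedProduct

theorem card_filter_image_prod_le {α β γ : Type*} [DecidableEq α] [DecidableEq β]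
    [DecidableEq γ] {f : α × β → γ} (hf : Injective f) (B : Finset α) (A : Finset β)
    {g : γ → γ} {u : α → α} {w : α → β → β} (h : ∀ b a, g (f (b, a)) = f (u b, w b a)) :
    #{x ∈ (B ×ˢ A).image f | g x ∉ (B ×ˢ A).image f} ≤
      #{b ∈ B | u b ∉ B} * #A + ∑ b ∈ B, #{a ∈ A | w b a ∉ A} := by
  rw [filter_image, card_image_of_injective _ hf]
  have hsub : {p ∈ B ×ˢ A | g (f p) ∉ (B ×ˢ A).image f} ⊆
      {p ∈ B ×ˢ A | u p.1 ∉ B} ∪ {p ∈ B ×ˢ A | w p.1 p.2 ∉ A} := by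
    rintro ⟨b, a⟩ hp
    simp only [mem_filter, mem_product, h, hf.mem_finset_image, mem_union] at hp ⊢
    tauto
  calc _ ≤ _ := card_le_card hsub
    _ ≤ _ := card_union_le _ _
    _ = _ := by
      rw [filter_product_left (fun b => u b ∉ B), card_product]
      simp only [card_filter, sum_product]

variable {G : Type*} [Group G] [DecidableEq G]

theorem isFolnerSet_image_prod {Q N : Type*} [Group Q] [DecidableEq Q] [Group N]
    [DecidableEq N] {f : Q × N → G} (hf : Injective f) {Ψ : Finset G} {B : Finset Q}
    {A : Finset N} {δ : ℝ} (u : G → Q) (w : G → Q → N)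
    (h : ∀ γ b a, γ * f (b, a) = f (u γ * b, w γ b * a))
    (hB : ∀ γ ∈ Ψ, (#(B ∆ (u γ • B)) : ℝ) ≤ δ * #B)
    (hA : ∀ γ ∈ Ψ, ∀ b ∈ B, (#(A ∆ (w γ b • A)) : ℝ) ≤ δ * #A) :
    IsFolnerSet Ψ (2 * δ) ((B ×ˢ A).image f) := by
  intro γ hγ
  have hescape := card_filter_image_prod_le hf B A (h γ)
  have hB' := hB γ hγ
  have hA' : ∑ b ∈ B, (2 * #{a ∈ A | w γ b * a ∉ A} : ℝ) ≤ ∑ _b ∈ B, δ * #A :=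
    sum_le_sum fun b hb => by exact_mod_cast (card_symmDiff_smul_finset _ A) ▸ hA γ hγ b hb
  rw [card_symmDiff_smul_finset] at hB' ⊢
  rw [card_image_of_injective _ hf, card_product]
  rw [← mul_sum, sum_const, nsmul_eq_mul] at hA'
  push_cast at hB' hA' ⊢
  have : (#{x ∈ (B ×ˢ A).image f | γ * x ∉ (B ×ˢ A).image f} : ℝ) ≤
      #{b ∈ B | u γ * b ∉ B} * #A + ∑ b ∈ B, (#{a ∈ A | w γ b * a ∉ A} : ℝ) := by
    exact_mod_cast hescape
  linarith [mul_le_mul_of_nonneg_right hB' (Nat.cast_nonneg (α := ℝ) #A)]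

end TwistedProduct

section Box

variable {ι A : Type*} [Fintype ι] [DecidableEq ι] [Group A] [DecidableEq A]

theorem filter_mulSingle_mul_notMem_piFinset (R : Finset A) (i : ι) (a : A) :
    {x ∈ Fintype.piFinset fun _ : ι => R |
        (Pi.mulSingle i a : ι → A) * x ∉ Fintype.piFinset fun _ : ι => R} =
      Fintype.piFinset (update (fun _ : ι => R) i {r ∈ R | a * r ∉ R}) := by
  ext x
  simp only [mem_filter, Fintype.mem_piFinset]
  constructor
  · rintro ⟨hx, hax⟩ j
    rcases eq_or_ne j i with rfl | hj
    · refine (update_self j _ _).symm ▸ mem_filter.mpr ⟨hx j, fun h => hax fun k => ?_⟩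
      rcases eq_or_ne k j with rfl | hk
      · simpa using h
      · simpa [Pi.mulSingle_eq_of_ne hk] using hx k
    · simpa [update_of_ne hj] using hx j
  · intro hx
    have hxi : x i ∈ R ∧ a * x i ∉ R := by simpa using hx i
    refine ⟨fun j => ?_, fun h => hxi.2 (by simpa using h i)⟩
    rcases eq_or_ne j i with rfl | hj
    · exact hxi.1
    · simpa [update_of_ne hj] using hx j

theorem card_symmDiff_mulSingle_smul_piFinset (R : Finset A) (i : ι) (a : A) :
    #((Fintype.piFinset fun _ : ι => R) ∆
      ((Pi.mulSingle i a : ι → A) • Fintype.piFinset fun _ : ι => R)) =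
      #(R ∆ (a • R)) * #R ^ (Fintype.card ι - 1) := by
  rw [card_symmDiff_smul_finset, card_symmDiff_smul_finset, filter_mulSingle_mul_notMem_piFinset,
    Fintype.card_piFinset, prod_eq_mul_prod_sdiff_singleton_of_mem (mem_univ i), update_self,
    prod_congr rfl fun j hj => by rw [update_of_ne (by simpa using hj)], prod_const,
    ← compl_eq_univ_sdiff, card_compl, card_singleton]
  ring

def ofAddRange (N : ℕ) : Finset (Multiplicative ℤ) :=
  (range N).image fun t : ℕ => Multiplicative.ofAdd (t : ℤ)

theorem card_ofAddRange (N : ℕ) : #(ofAddRange N) = N := by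
  rw [ofAddRange, card_image_of_injective _ fun s t h => by simpa using h, card_range]

theorem card_symmDiff_ofAdd_one_smul_ofAddRange_le (N : ℕ) :
    #(ofAddRange N ∆ (Multiplicative.ofAdd (1 : ℤ) • ofAddRange N)) ≤ 2 := by
  rw [card_symmDiff_smul_finset]
  suffices h : {r ∈ ofAddRange N | Multiplicative.ofAdd 1 * r ∉ ofAddRange N} ⊆
      {Multiplicative.ofAdd ((N - 1 : ℕ) : ℤ)} by
    have := card_le_card h
    rw [card_singleton] at this
    omega
  intro r hr
  obtain ⟨⟨t, ht, rfl⟩, hnot⟩ := (mem_filter.mp hr).imp_left mem_image.mp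
  rw [mem_range] at ht
  rw [mem_singleton]
  by_contra hne
  refine hnot (mem_image.mpr ⟨t + 1, mem_range.mpr ?_, ?_⟩)
  · by_contra! hN
    exact hne (by congr; omega)
  · rw [← ofAdd_add]
    push_cast
    ring_nf

theorem card_symmDiff_mulSingle_smul_piFinset_ofAddRange_le (N : ℕ) (i : ι) :
    (#((Fintype.piFinset fun _ : ι => ofAddRange N) ∆
      ((Pi.mulSingle i (Multiplicative.ofAdd (1 : ℤ)) : ι → _) •
        Fintype.piFinset fun _ : ι => ofAddRange N)) : ℝ) ≤
      2 / N * #(Fintype.piFinset fun _ : ι => ofAddRange N) := by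
  rcases N.eq_zero_or_pos with rfl | hN
  · have : (Fintype.piFinset fun _ : ι => ofAddRange 0) = ∅ :=
      Fintype.piFinset_eq_empty.mpr ⟨i, by simp [ofAddRange]⟩
    simp [this]
  obtain ⟨m, hm⟩ : ∃ m, Fintype.card ι = m + 1 :=
    Nat.exists_eq_add_one.mpr (Fintype.card_pos_iff.mpr ⟨i⟩)
  rw [card_symmDiff_mulSingle_smul_piFinset, Fintype.card_piFinset, prod_const, card_univ,
    card_ofAddRange, hm, Nat.add_sub_cancel, pow_succ]
  push_cast
  calc (#(ofAddRange N ∆ (Multiplicative.ofAdd (1 : ℤ) • ofAddRange N)) * N ^ m : ℝ)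
      ≤ 2 * N ^ m := by
        gcongr
        exact_mod_cast card_symmDiff_ofAdd_one_smul_ofAddRange_le N
    _ = 2 / N * (N ^ m * N) := by
        rw [div_mul_eq_mul_div, mul_div_assoc, mul_div_cancel_right₀ _ (by positivity)]

end Box

section Closure

variable {G K : Type} [Group G] [DecidableEq G] [Group K] [DecidableEq K] {F : ℕ → ℝ → ℕ}

theorem natCast_mul_div_succ_le {k n : ℕ} (hk : k ≤ n) {ε : ℝ} (hε : 0 ≤ ε) :
    (k : ℝ) * (ε / (n + 1)) ≤ ε := by
  rw [mul_div_assoc', div_le_iff₀ (by positivity)]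
  have : (k : ℝ) ≤ n := by exact_mod_cast hk
  nlinarith

theorem div_succ_lt_one {n : ℕ} {ε : ℝ} (hε : ε < 1) : ε / (n + 1) < 1 := by
  rw [div_lt_one (by positivity)]
  linarith [(Nat.cast_nonneg n : (0 : ℝ) ≤ n)]

theorem IsUnifAmenableWith.subgroup (hG : IsUnifAmenableWith G F) (H : Subgroup G) :
    IsUnifAmenableWith H fun n ε => F n (ε / (n + 1)) := by
  rw [isUnifAmenableWith_iff] at hG ⊢
  intro Ψ n ε hn hε₀ hε₁
  obtain ⟨Φ, hΦ, hcard, hfolner⟩ := hG (Ψ.image H.subtype) n (ε / (n + 1))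
    (card_image_le.trans hn) (by positivity) (div_succ_lt_one hε₁)
  obtain ⟨Φ', hΦ', hcard', hfolner'⟩ :=
    exists_isFolnerSet_subgroup H Ψ hΦ fun γ hγ => hfolner γ (mem_image_of_mem _ hγ)
  exact ⟨Φ', hΦ', hcard'.trans hcard, hfolner'.mono (natCast_mul_div_succ_le hn hε₀.le)⟩

theorem IsUnifAmenableWith.of_surjective (hG : IsUnifAmenableWith G F) {φ : G →* K}
    (hφ : Surjective φ) : IsUnifAmenableWith K fun n ε => F n (ε / (n + 1)) := by
  rw [isUnifAmenableWith_iff] at hG ⊢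
  intro Ψ n ε hn hε₀ hε₁
  obtain ⟨Φ, hΦ, hcard, hfolner⟩ := hG (Ψ.image (surjInv hφ)) n (ε / (n + 1))
    (card_image_le.trans hn) (by positivity) (div_succ_lt_one hε₁)
  obtain ⟨Φ', hΦ', hcard', hfolner'⟩ := exists_isFolnerSet_of_map φ Ψ hΦ fun γ hγ =>
    ⟨surjInv hφ γ, surjInv_eq hφ γ, hfolner _ (mem_image_of_mem _ hγ)⟩
  exact ⟨Φ', hΦ', hcard'.trans hcard, hfolner'.mono (natCast_mul_div_succ_le hn hε₀.le)⟩

theorem IsUnifAmenable.prod (hG : IsUnifAmenable G) (hK : IsUnifAmenable K) :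
    IsUnifAmenable (G × K) := by
  obtain ⟨FG, hFG⟩ := hG
  obtain ⟨FK, hFK⟩ := hK
  refine ⟨fun n ε => FG n (ε / 2) * FK n (ε / 2), ?_⟩
  rw [isUnifAmenableWith_iff] at *
  intro Ψ n ε hn hε₀ hε₁
  obtain ⟨B, hB, hBcard, hBfolner⟩ :=
    hFG (Ψ.image Prod.fst) n (ε / 2) (card_image_le.trans hn) (by positivity) (by linarith)
  obtain ⟨A, hA, hAcard, hAfolner⟩ :=
    hFK (Ψ.image Prod.snd) n (ε / 2) (card_image_le.trans hn) (by positivity) (by linarith)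
  refine ⟨B ×ˢ A, hB.product hA, card_product B A ▸ Nat.mul_le_mul hBcard hAcard, ?_⟩
  have := isFolnerSet_image_prod (f := id) injective_id Prod.fst (fun γ _ => γ.2)
    (fun _ _ _ => rfl) (fun γ hγ => hBfolner _ (mem_image_of_mem _ hγ))
    (fun γ hγ _ _ => hAfolner _ (mem_image_of_mem _ hγ))
  rwa [image_id, mul_div_cancel₀ _ two_ne_zero] at this

theorem isUnifAmenable_of_subgroup_quotient (N : Subgroup G) [N.Normal]
    [DecidableEq (G ⧸ N)] (hN : IsUnifAmenable N) (hQ : IsUnifAmenable (G ⧸ N)) :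
    IsUnifAmenable G := by
  obtain ⟨FN, hFN⟩ := hN
  obtain ⟨FQ, hFQ⟩ := hQ
  refine ⟨fun n ε => FQ n (ε / 2) * FN (n * FQ n (ε / 2)) (ε / 2), ?_⟩
  rw [isUnifAmenableWith_iff] at *
  intro Ψ n ε hn hε₀ hε₁
  obtain ⟨B, hB, hBcard, hBfolner⟩ := hFQ (Ψ.image (↑)) n (ε / 2)
    (card_image_le.trans hn) (by positivity) (by linarith)
  -- chosen so that `γ * b.out = (γ * b).out * w γ b`
  let w : G → G ⧸ N → N := fun γ b => ⟨(γ * b : G ⧸ N).out⁻¹ * (γ * b.out),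
    QuotientGroup.eq.mp (by rw [QuotientGroup.out_eq', QuotientGroup.mk_mul,
      QuotientGroup.out_eq'])⟩
  obtain ⟨A, hA, hAcard, hAfolner⟩ := hFN ((Ψ ×ˢ B).image fun p => w p.1 p.2)
    (n * FQ n (ε / 2)) (ε / 2)
    (card_image_le.trans (card_product Ψ B ▸ Nat.mul_le_mul hn hBcard)) (by positivity)
    (by linarith)
  let f : (G ⧸ N) × N → G := fun p => p.1.out * p.2
  have hf : Injective f := by
    rintro ⟨b, a⟩ ⟨b', a'⟩ h
    obtain rfl : b = b' := by
      simpa [f, QuotientGroup.mk_mul_of_mem _ a.2, QuotientGroup.mk_mul_of_mem _ a'.2]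
        using congrArg ((↑) : G → G ⧸ N) h
    exact Prod.ext rfl (Subtype.ext (mul_left_cancel h))
  refine ⟨(B ×ˢ A).image f, (hB.product hA).image f,
    card_image_le.trans (card_product B A ▸ Nat.mul_le_mul hBcard hAcard), ?_⟩
  have := isFolnerSet_image_prod hf (↑) w
    (fun γ b a => by simp only [f, w, Subgroup.coe_mul]; group)
    (fun γ hγ => hBfolner _ (mem_image_of_mem _ hγ))
    (fun γ hγ b hb => hAfolner _ (mem_image.mpr ⟨(γ, b), mem_product.mpr ⟨hγ, hb⟩, rfl⟩))
  rwa [mul_div_cancel₀ _ two_ne_zero] at this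

theorem isUnifAmenable_of_isMulCommutative (G : Type) [Group G] [DecidableEq G]
    [IsMulCommutative G] : IsUnifAmenable G := by
  refine ⟨fun n ε => (⌈2 * n / ε⌉₊ + 1) ^ n, ?_⟩
  rw [isUnifAmenableWith_iff]
  intro Ψ n ε hn hε₀ _
  set N := ⌈2 * n / ε⌉₊ + 1
  have hN : 0 < N := Nat.succ_pos _
  set box := Fintype.piFinset fun _ : Ψ => ofAddRange N
  have hbox : #box = N ^ #Ψ := by simp [box, card_ofAddRange]
  let φ : (Ψ → Multiplicative ℤ) →* G :=
    MonoidHom.noncommPiCoprod (fun γ => zpowersHom G γ) fun _ _ _ _ _ => mul_comm' _ _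
  obtain ⟨Φ, hΦ, hcard, hΦfolner⟩ := exists_isFolnerSet_of_map φ Ψ (δ := 2 / N)
    (Fintype.piFinset_nonempty.mpr fun _ => card_pos.mp ((card_ofAddRange N).symm ▸ hN))
    fun γ hγ => ⟨Pi.mulSingle ⟨γ, hγ⟩ (Multiplicative.ofAdd (1 : ℤ)),
      (MonoidHom.noncommPiCoprod_mulSingle _ _ _).trans (by simp),
      card_symmDiff_mulSingle_smul_piFinset_ofAddRange_le N _⟩
  refine ⟨Φ, hΦ, hcard.trans ?_, hΦfolner.mono ?_⟩
  · rw [hbox]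
    exact Nat.pow_le_pow_right hN hn
  · have hNε : 2 * n / ε ≤ N := by
      have := Nat.le_ceil (2 * n / ε)
      simp only [N, Nat.cast_add, Nat.cast_one]
      linarith
    rw [div_le_iff₀ hε₀] at hNε
    rw [← mul_div_assoc, div_le_iff₀ (by positivity)]
    have : (#Ψ : ℝ) ≤ n := by exact_mod_cast hn
    nlinarith

end Closure

theorem isUnifAmenable_of_derivedSeries_eq_bot (n : ℕ) :
    ∀ (G : Type) [Group G] [DecidableEq G], derivedSeries G n = ⊥ → IsUnifAmenable G := by
  induction n with
  | zero =>
    intro G _ _ h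
    rw [derivedSeries_zero] at h
    have hG : ∀ a : G, a = 1 := fun a => Subgroup.mem_bot.mp (h ▸ Subgroup.mem_top a)
    have : IsMulCommutative G := ⟨⟨fun a b => by rw [hG a, hG b]⟩⟩
    exact isUnifAmenable_of_isMulCommutative G
  | succ n ih =>
    intro G _ _ h
    classical
    have : IsMulCommutative (derivedSeries G n) :=
      Subgroup.commutator_self_eq_bot_iff.mp (by rwa [← derivedSeries_succ])
    refine isUnifAmenable_of_subgroup_quotient (derivedSeries G n)
      (isUnifAmenable_of_isMulCommutative _) (ih _ ?_)
    rw [← map_derivedSeries_eq (QuotientGroup.mk'_surjective _), QuotientGroup.map_mk'_self]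

theorem Group.IsSolvable.isUnifAmenable {G : Type} [Group G] [DecidableEq G]
    (hG : Group.IsSolvable G) : IsUnifAmenable G :=
  let ⟨n, hn⟩ := hG.solvable
  isUnifAmenable_of_derivedSeries_eq_bot n G hn

/-- Every solvable group is uniformly amenable; uniform amenability passes to subgroups
(with a Følner function depending only on the original one), to homomorphic images, and
to finite (binary) direct products. -/
theorem unifAmenable_closure_properties :
    (∀ (G : Type) [Group G] [DecidableEq G], IsSolvable G → IsUnifAmenable G) ∧
    (∃ T : (ℕ → ℝ → ℕ) → (ℕ → ℝ → ℕ),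
      ∀ (G : Type) [Group G] [DecidableEq G] (F : ℕ → ℝ → ℕ),
        IsUnifAmenableWith G F → ∀ H : Subgroup G, IsUnifAmenableWith H (T F)) ∧
    (∀ (G K : Type) [Group G] [DecidableEq G] [Group K] [DecidableEq K]
        (φ : G →* K), Function.Surjective φ → IsUnifAmenable G → IsUnifAmenable K) ∧
    (∀ (G K : Type) [Group G] [DecidableEq G] [Group K] [DecidableEq K],
      IsUnifAmenable G → IsUnifAmenable K → IsUnifAmenable (G × K)) :=
  ⟨fun _ _ _ hG => hG.isUnifAmenable,
    ⟨fun F n ε => F n (ε / (n + 1)), fun _ _ _ _ hF H => hF.subgroup H⟩,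
    fun _ _ _ _ _ _ _ hφ ⟨_, hF⟩ => ⟨_, hF.of_surjective hφ⟩,
    fun _ _ _ _ _ _ hG hK => hG.prod hK⟩
end

section
/- Let p be a non-principal ultrafilter on ℕ, (Γ_n) a sequence of groups, Γ_* their ultraproduct, and for each n let A_n ⊆ Γ_n, with A_* = ∏_{n→p} A_n the internal subset of Γ_*. Then st(lim_{n→p} BD_{Γ_n}(A_n)) = inf{ st(lim_{n→p} m_n(A_n)) : m_n an invariant finitely additive probability measure on Γ_n for each n }, where BD_{Γ_n} denotes lower Banach density and st denotes the standard part. -/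
/-!
Choose, for every `n`, an invariant mean `m_n` with `m_n(A_n) < BD(A_n) + ε`; its ultralimit is
then within `ε` of the ultralimit of `BD(A_n)`, while every choice of means gives an ultralimit at
least that of `BD(A_n)` because `BD(A_n) ≤ m_n(A_n)` termwise. All ultralimits exist since the
values lie in the compact interval `[0, 1]`.
-/

open Filter

/-- An invariant finitely additive probability measure on the discrete group `G`. -/
def IsInvFAPM {G : Type} [Group G] (ν : Set G → ℝ) : Prop :=
  (∀ E : Set G, 0 ≤ ν E) ∧ (∀ E : Set G, ν E ≤ 1) ∧ ν Set.univ = 1 ∧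
  (∀ E F : Set G, Disjoint E F → ν (E ∪ F) = ν E + ν F) ∧
  (∀ (γ : G) (E : Set G), ν ((γ * ·) '' E) = ν E)

/-- The lower Banach density of `A ⊆ G`. -/
noncomputable def lowerBD {G : Type} [Group G] (A : Set G) : ℝ :=
  sInf {x : ℝ | ∃ ν : Set G → ℝ, IsInvFAPM ν ∧ x = ν A}

open Topology

theorem csInf_mem_Icc_of_subset {α : Type*} [ConditionallyCompleteLattice α] {s : Set α}
    {a b : α} (hne : s.Nonempty) (hs : s ⊆ Set.Icc a b) : sInf s ∈ Set.Icc a b :=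
  ⟨le_csInf hne fun _ hx => (hs hx).1,
    (csInf_le ⟨a, fun _ hx => (hs hx).1⟩ hne.some_mem).trans (hs hne.some_mem).2⟩

theorem IsCompact.exists_tendsto_of_eventually_mem {X ι : Type*} [TopologicalSpace X] {K : Set X}
    (hK : IsCompact K) (p : Ultrafilter ι) {f : ι → X} (hf : ∀ᶠ i in (p : Filter ι), f i ∈ K) :
    ∃ x ∈ K, Tendsto f p (𝓝 x) :=
  hK.ultrafilter_le_nhds (p.map f) (le_principal_iff.mpr hf)

theorem Ultrafilter.eq_sInf_of_tendsto_sInf {ι : Type*} (p : Ultrafilter ι) {a b : ℝ}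
    {T : ι → Set ℝ} (hne : ∀ i, (T i).Nonempty) (hT : ∀ i, T i ⊆ Set.Icc a b) {L : ℝ}
    (hL : Tendsto (fun i => sInf (T i)) p (𝓝 L)) :
    L = sInf {x | ∃ t : ι → ℝ, (∀ i, t i ∈ T i) ∧ Tendsto t p (𝓝 x)} := by
  have hlim : ∀ t : ι → ℝ, (∀ i, t i ∈ T i) → ∃ x, Tendsto t p (𝓝 x) := fun t ht =>
    let ⟨x, _, hx⟩ := isCompact_Icc.exists_tendsto_of_eventually_mem p
      (.of_forall fun i => hT i (ht i))
    ⟨x, hx⟩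
  have hbdd : ∀ i, BddBelow (T i) := fun i => ⟨a, fun x hx => (hT i hx).1⟩
  refine le_antisymm ?_ (le_of_forall_pos_le_add fun ε hε => ?_)
  · choose t ht using hne
    obtain ⟨x₀, hx₀⟩ := hlim t ht
    refine le_csInf ⟨x₀, t, ht, hx₀⟩ ?_
    rintro x ⟨s, hs, hx⟩
    exact le_of_tendsto_of_tendsto' hL hx fun i => csInf_le (hbdd i) (hs i)
  · choose t ht hlt using fun i => Real.lt_sInf_add_pos (hne i) hε
    obtain ⟨x, hx⟩ := hlim t ht
    have hSbdd : BddBelow {x | ∃ t : ι → ℝ, (∀ i, t i ∈ T i) ∧ Tendsto t p (𝓝 x)} := by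
      refine ⟨a, ?_⟩
      rintro y ⟨s, hs, hy⟩
      exact ge_of_tendsto' hy fun i => (hT i (hs i)).1
    calc sInf _ ≤ x := csInf_le hSbdd ⟨t, ht, hx⟩
      _ ≤ L + ε := le_of_tendsto_of_tendsto' hx (hL.add_const ε) fun i => (hlt i).le

section InvariantMeans

variable {G : Type} [Group G]

/-- The values that invariant means assign to `A`; `lowerBD A` is their infimum. -/
def invMeanValues (A : Set G) : Set ℝ :=
  {x : ℝ | ∃ ν : Set G → ℝ, IsInvFAPM ν ∧ x = ν A}

theorem invMeanValues_subset_Icc (A : Set G) : invMeanValues A ⊆ Set.Icc 0 1 := by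
  rintro x ⟨ν, hν, rfl⟩
  exact ⟨hν.1 A, hν.2.1 A⟩

theorem invMeanValues_nonempty {ν : Set G → ℝ} (hν : IsInvFAPM ν) (A : Set G) :
    (invMeanValues A).Nonempty :=
  ⟨ν A, ν, hν, rfl⟩

end InvariantMeans

theorem setOf_tendsto_invMeans_eq {Γ : ℕ → Type} [∀ n, Group (Γ n)] (p : Ultrafilter ℕ)
    (A : ∀ n, Set (Γ n)) :
    {x : ℝ | ∃ m : ∀ n, Set (Γ n) → ℝ,
        (∀ n, IsInvFAPM (m n)) ∧ Tendsto (fun n => m n (A n)) (p : Filter ℕ) (𝓝 x)} =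
      {x | ∃ t : ℕ → ℝ, (∀ n, t n ∈ invMeanValues (A n)) ∧ Tendsto t p (𝓝 x)} := by
  ext x
  constructor
  · rintro ⟨m, hm, hx⟩
    exact ⟨fun n => m n (A n), fun n => ⟨m n, hm n, rfl⟩, hx⟩
  · rintro ⟨t, ht, hx⟩
    choose m hm hmt using ht
    exact ⟨m, hm, by simpa only [← hmt] using hx⟩

theorem ultralimit_lowerBD_general (p : Ultrafilter ℕ)
    (Γ : ℕ → Type) [∀ n, Group (Γ n)]
    (hamen : ∀ n, ∃ ν : Set (Γ n) → ℝ, IsInvFAPM ν)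
    (A : ∀ n, Set (Γ n)) :
    ∃ L : ℝ, Tendsto (fun n => lowerBD (A n)) (p : Filter ℕ) (nhds L) ∧
      L = sInf {x : ℝ | ∃ m : ∀ n, Set (Γ n) → ℝ,
            (∀ n, IsInvFAPM (m n)) ∧
            Tendsto (fun n => m n (A n)) (p : Filter ℕ) (nhds x)} := by
  have hne n : (invMeanValues (A n)).Nonempty :=
    let ⟨_, hν⟩ := hamen n
    invMeanValues_nonempty hν (A n)
  obtain ⟨L, -, hL⟩ := isCompact_Icc.exists_tendsto_of_eventually_mem p
    (.of_forall fun n => csInf_mem_Icc_of_subset (hne n) (invMeanValues_subset_Icc (A n)))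
  refine ⟨L, hL, ?_⟩
  rw [setOf_tendsto_invMeans_eq]
  exact p.eq_sInf_of_tendsto_sInf hne (fun n => invMeanValues_subset_Icc (A n)) hL

/-- The standard part of the ultralimit of the lower Banach densities `BD_{Γ_n}(A_n)`
equals the infimum, over all choices of invariant finitely additive probability measures
`m_n` on `Γ_n`, of the standard part of the ultralimit of `m_n(A_n)`. (Ultralimits of
bounded real sequences along `p` are expressed via `Tendsto _ ↑p (nhds _)`.) -/
theorem ultralimit_lowerBD (p : Ultrafilter ℕ) (hp : ∀ a : ℕ, p ≠ (pure a : Ultrafilter ℕ))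
    (Γ : ℕ → Type) [∀ n, Group (Γ n)]
    (hamen : ∀ n, ∃ ν : Set (Γ n) → ℝ, IsInvFAPM ν)
    (A : ∀ n, Set (Γ n)) :
    ∃ L : ℝ, Tendsto (fun n => lowerBD (A n)) (p : Filter ℕ) (nhds L) ∧
      L = sInf {x : ℝ | ∃ m : ∀ n, Set (Γ n) → ℝ,
            (∀ n, IsInvFAPM (m n)) ∧
            Tendsto (fun n => m n (A n)) (p : Filter ℕ) (nhds x)} :=
  ultralimit_lowerBD_general p Γ hamen A
end
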